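/- Let M1 and M2 be equivalent deterministic top-down tree transducers with state sets Q1 and Q2 and common domain D, and let h be the maximal height of the right-hand side of any rule of M1 or M2. Then M1 and M2 have height-balance bounded by c = 2^{|Q1|+|Q2|}·h: for every s ∈ D and every node u of s, |height(M1(s[u←x])) − height(M2(s[u←x]))| ≤ c. -/

import Mathlib

/-! ## Finite ordered ranked trees -/

/-- Finite ordered labeled trees. -/
inductive RTree (α : Type) : Type
  | node : α → List (RTree α) → RTree α

namespace RTree

variable {α β : Type}

/-- The label of the root node. -/
def label : RTree α → α
  | node a _ => a

mutual
  /-- The size (number of nodes) of a tree. -/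
  def size : RTree α → ℕ
    | node _ ts => 1 + sizeList ts
  def sizeList : List (RTree α) → ℕ
    | [] => 0
    | t :: ts => size t + sizeList ts
end

mutual
  /-- The height of a tree (a leaf has height 1). -/
  def height : RTree α → ℕ
    | node _ ts => 1 + heightList ts
  def heightList : List (RTree α) → ℕ
    | [] => 0
    | t :: ts => max (height t) (heightList ts)
end

mutual
  /-- Relabeling of a tree. -/
  def map (f : α → β) : RTree α → RTree β
    | node a ts => node (f a) (mapList f ts)
  def mapList (f : α → β) : List (RTree α) → List (RTree β)
    | [] => []
    | t :: ts => map f t :: mapList f ts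
end

/-- `WF rk t` means `t` is a tree over the ranked alphabet with rank function `rk`:
every node labeled `a` has exactly `rk a` children.  Thus `T_Σ = {t | WF rk t}`. -/
inductive WF (rk : α → ℕ) : RTree α → Prop
  | node {a : α} {ts : List (RTree α)} :
      ts.length = rk a → (∀ t ∈ ts, WF rk t) → WF rk (node a ts)

/-- `SubtreeAt t u r`: `u` is (the Dewey path of) a node of `t` and `r` is the
subtree of `t` rooted at `u`. -/
inductive SubtreeAt : RTree α → List ℕ → RTree α → Prop
  | here (t : RTree α) : SubtreeAt t [] t
  | child {a : α} {ts : List (RTree α)} {i : ℕ} {u : List ℕ} {ti r : RTree α} :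
      ts[i]? = some ti → SubtreeAt ti u r → SubtreeAt (node a ts) (i :: u) r

/-- `ReplaceAt t u r t'`: `u` is a node of `t`, and `t'` is the tree `t[u ← r]`
obtained from `t` by replacing the subtree rooted at `u` by `r`. -/
inductive ReplaceAt : RTree α → List ℕ → RTree α → RTree α → Prop
  | here (t r : RTree α) : ReplaceAt t [] r r
  | child {a : α} {ts : List (RTree α)} {i : ℕ} {u : List ℕ} {r ti ti' : RTree α} :
      ts[i]? = some ti → ReplaceAt ti u r ti' →
      ReplaceAt (node a ts) (i :: u) r (node a (ts.set i ti'))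

end RTree

/-- A (complete) deterministic finite-state bottom-up tree automaton over the
alphabet `S`, with state set `P` and final states `final`. -/
structure BUA (S P : Type) where
  delta : S → List P → P
  final : Set P

variable {S P : Type}

mutual
  /-- The state reached by a bottom-up automaton on a tree. -/
  def buaRun (A : BUA S P) : RTree S → P
    | .node a ts => A.delta a (buaRunList A ts)
  def buaRunList (A : BUA S P) : List (RTree S) → List P
    | [] => []
    | t :: ts => buaRun A t :: buaRunList A ts
end

/-- A tree language over the ranked alphabet `(S, rk)` is regular if it is recognized
by a deterministic finite-state bottom-up tree automaton. -/
def RegularTreeLang (rk : S → ℕ) (L : Set (RTree S)) : Prop :=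
  ∃ (P : Type) (_ : Fintype P) (A : BUA S P),
    L = {t | RTree.WF rk t ∧ buaRun A t ∈ A.final}
/-! ## Deterministic macro tree transducers

A state of rank `m+1` is encoded by `prm q = m` (its number of context parameters).
Right-hand sides of rules are trees over `Δ ∪ Q ∪ X ∪ Y`, where every `Q`-labeled
node has an input variable `x_i` as its (implicit) first child; this is encoded by
the constructor `MRhs.call q i ps`.  A top-down tree transducer is exactly a macro
tree transducer all of whose states have rank one (`prm q = 0`).

To be able to talk about partial inputs `s[u ← x]`, input trees are trees over
`Option S`, where `none` plays the role of the fresh rank-0 symbol `x`; an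
ordinary input tree `s` is represented as `RTree.map some s`.  Outputs (sentential
forms) are trees over the alphabet `PL Q D`: output symbols `PL.out d`, unresolved
state calls `PL.st q` (i.e. `q(x, t₁, …, t_m)`, whose children are the current
parameter trees), and formal context parameters `PL.pr j` (i.e. `y_{j+1}`). -/

/-- Labels of sentential forms produced by a macro tree transducer. -/
inductive PL (Q D : Type) : Type
  | out : D → PL Q D
  | st : Q → PL Q D
  | pr : ℕ → PL Q D

/-- Right-hand sides of rules of a macro tree transducer with states `Q` and output
alphabet `D`: `out d ts` is an output symbol with subtrees, `param j` is the context
parameter `y_{j+1}`, and `call q i ps` is a state call `q(x_{i+1}, ps)`. -/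
inductive MRhs (Q D : Type) : Type
  | out : D → List (MRhs Q D) → MRhs Q D
  | param : ℕ → MRhs Q D
  | call : Q → ℕ → List (MRhs Q D) → MRhs Q D

/-- Well-formedness of a right-hand side for a rule of a state with `m` parameters
and an input symbol of rank `k`: output symbols have the right number of children,
parameters are among `y_1, …, y_m`, input variables are among `x_1, …, x_k`, and a
call of state `q'` passes exactly `prm q'` parameter trees. -/
inductive RhsWF {Q D : Type} (rkD : D → ℕ) (prm : Q → ℕ) (k m : ℕ) : MRhs Q D → Prop
  | out {d ts} : ts.length = rkD d → (∀ t ∈ ts, RhsWF rkD prm k m t) →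
      RhsWF rkD prm k m (.out d ts)
  | param {j} : j < m → RhsWF rkD prm k m (.param j)
  | call {q i ps} : i < k → ps.length = prm q → (∀ t ∈ ps, RhsWF rkD prm k m t) →
      RhsWF rkD prm k m (.call q i ps)

/-- A deterministic macro tree transducer with states `Q`, input alphabet `(S, rkS)`
and output alphabet `(D, rkD)`.  `prm q` is the number of context parameters of
state `q` (so `q` has rank `prm q + 1`); `rules q σ` is the right-hand side of the
`(q,σ)`-rule, if present (determinism: at most one rule per pair). -/
structure MTT (Q S D : Type) where
  rkS : S → ℕ
  rkD : D → ℕ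
  prm : Q → ℕ
  init : Q
  rules : Q → S → Option (MRhs Q D)

namespace MTT

variable {Q S D : Type}

/-- `M` is a well-formed macro tree transducer: the initial state has rank one and
all right-hand sides are well-formed. -/
def Proper (M : MTT Q S D) : Prop :=
  M.prm M.init = 0 ∧
    ∀ q σ r, M.rules q σ = some r → RhsWF M.rkD M.prm (M.rkS σ) (M.prm q) r

/-- `M` is total: there is exactly one rule for every state and input symbol. -/
def Total (M : MTT Q S D) : Prop := ∀ q σ, (M.rules q σ).isSome

end MTT

/-- A top-down tree transducer is a macro tree transducer each of whose states has
rank one, i.e. no context parameters. -/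
def IsTopDown {Q S D : Type} (M : MTT Q S D) : Prop := ∀ q, M.prm q = 0

/-- A macro tree transducer is monadic if its input and output ranked alphabets
only contain symbols of rank 1 and rank 0. -/
def MTT.Monadic {Q S D : Type} (M : MTT Q S D) : Prop :=
  (∀ σ, M.rkS σ ≤ 1) ∧ (∀ d, M.rkD d ≤ 1)

variable {Q S D : Type}

mutual
  /-- Second-order substitution of the parameter leaves `y_{j+1}` of a sentential
  form by the trees `vs`. -/
  def psubst (vs : List (RTree (PL Q D))) : RTree (PL Q D) → RTree (PL Q D)
    | .node (.pr j) _ => vs.getD j (.node (.pr j) [])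
    | .node (.out d) ts => .node (.out d) (psubstList vs ts)
    | .node (.st q) ts => .node (.st q) (psubstList vs ts)
  def psubstList (vs : List (RTree (PL Q D))) :
      List (RTree (PL Q D)) → List (RTree (PL Q D))
    | [] => []
    | t :: ts => psubst vs t :: psubstList vs ts
end

/-- The fresh rank-0 input symbol `x` used in partial inputs `s[u ← x]`. -/
def xLeaf {S : Type} : RTree (Option S) := .node none []

mutual
  /-- Big-step semantics of a macro tree transducer: `MEval M q s t` means that the
  computation of `M` started in state `q` on the input tree `s` (a tree over
  `Option S`, where `none` is the fresh symbol `x` of partial inputs) produces the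
  (sentential form) tree `t`.  On the symbol `x` the computation blocks, yielding
  the unresolved call `q(x, y_1, …, y_m)`.  For `s ∈ T_Σ` (no occurrence of `x`)
  and well-formed transducers, `t` contains no `PL.st` labels, and `M_q(s)` is
  defined iff such a `t` exists; determinism makes `t` unique. -/
  inductive MEval (M : MTT Q S D) : Q → RTree (Option S) → RTree (PL Q D) → Prop
    | atX (q : Q) :
        MEval M q (.node none [])
          (.node (.st q) ((List.range (M.prm q)).map fun j => .node (.pr j) []))
    | step {q : Q} {σ : S} {ss : List (RTree (Option S))} {r : MRhs Q D}
        {t : RTree (PL Q D)} :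
        M.rules q σ = some r → MExpand M ss r t → MEval M q (.node (some σ) ss) t

  /-- Evaluation of a right-hand side with current input subtrees `ss`. -/
  inductive MExpand (M : MTT Q S D) :
      List (RTree (Option S)) → MRhs Q D → RTree (PL Q D) → Prop
    | out {ss d ts us} : MExpandList M ss ts us →
        MExpand M ss (.out d ts) (.node (.out d) us)
    | param {ss j} : MExpand M ss (.param j) (.node (.pr j) [])
    | call {ss : List (RTree (Option S))} {q : Q} {i : ℕ} {ps : List (MRhs Q D)}
        {si : RTree (Option S)} {vs : List (RTree (PL Q D))} {u : RTree (PL Q D)} :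
        ss[i]? = some si → MExpandList M ss ps vs → MEval M q si u →
        MExpand M ss (.call q i ps) (psubst vs u)

  inductive MExpandList (M : MTT Q S D) :
      List (RTree (Option S)) → List (MRhs Q D) → List (RTree (PL Q D)) → Prop
    | nil {ss} : MExpandList M ss [] []
    | cons {ss t ts u us} : MExpand M ss t u → MExpandList M ss ts us →
        MExpandList M ss (t :: ts) (u :: us)
end

/-- The translation `τ_M ⊆ T_Σ × T_Δ` realized by a macro tree transducer `M`
(the graph of the partial function `τ_M : T_Σ ⇀ T_Δ`). -/
def MTT.tau (M : MTT Q S D) : Set (RTree S × RTree D) :=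
  {p | RTree.WF M.rkS p.1 ∧ MEval M M.init (RTree.map some p.1) (RTree.map PL.out p.2)}

mutual
  /-- The height of a right-hand side, viewed as a tree over `Δ ∪ Q ∪ X ∪ Y`
  (a state call `q(x_i, ps)` has the leaf `x_i` as an additional child). -/
  def rhsHeight {Q D : Type} : MRhs Q D → ℕ
    | .out _ ts => 1 + rhsHeightList ts
    | .param _ => 1
    | .call _ _ ps => 1 + max 1 (rhsHeightList ps)
  def rhsHeightList {Q D : Type} : List (MRhs Q D) → ℕ
    | [] => 0
    | t :: ts => max (rhsHeight t) (rhsHeightList ts)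
end


/-!
Call the set of states of `M₁` and of `M₂` that are defined on a complete tree its *type*. The
type of `σ(t₁, …, tₖ)` only depends on `σ` and the types of the `tᵢ`, so pumping yields, for the
subtree `s/u`, a tree `w` of the same type whose height is at most the number `2^(|Q₁|+|Q₂|)` of
types. Every state call `q(x)` in `Mᵢ(s[u←x])` is defined on `s/u`, hence on `w`; so
`s[u←w]` lies in the common domain and `Mᵢ(s[u←w])` arises from `Mᵢ(s[u←x])` by replacing each
`q(x)` by `M_q(w)`, of height at most `h · height w`. The outputs of `M₁` and `M₂` on `s[u←w]`
coincide, and the height of each lies between `height(Mᵢ(s[u←x]))` and that plus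
`h · height w ≤ 2^(|Q₁|+|Q₂|) · h`.
-/

theorem List.exists_map_eq_map_of_forall_mem {α β : Type} {p : α → Prop} {g : α → β}
    {as : List α} (h : ∀ a ∈ as, ∃ b, p b ∧ g b = g a) :
    ∃ bs : List α, (∀ b ∈ bs, p b) ∧ bs.map g = as.map g := by
  induction as with
  | nil => exact ⟨[], by simp⟩
  | cons a as ih =>
    obtain ⟨b, hb, hgb⟩ := h a List.mem_cons_self
    obtain ⟨bs, hbs, hmap⟩ := ih fun a' ha' => h a' (List.mem_cons_of_mem a ha')
    exact ⟨b :: bs, List.forall_mem_cons.2 ⟨hb, hbs⟩, by simp [hgb, hmap]⟩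

namespace RTree

variable {α β : Type}

@[induction_eliminator]
theorem ind {motive : RTree α → Prop}
    (node : ∀ a ts, (∀ t ∈ ts, motive t) → motive (node a ts)) (t : RTree α) : motive t :=
  RTree.rec (motive_2 := fun ts => ∀ t ∈ ts, motive t) node (List.forall_mem_nil _)
    (fun _ _ iht ihts => List.forall_mem_cons.2 ⟨iht, ihts⟩) t

theorem height_pos (t : RTree α) : 1 ≤ height t := by
  cases t; simp [height]

theorem height_le_heightList {ts : List (RTree α)} {t : RTree α} (ht : t ∈ ts) :
    height t ≤ heightList ts := by
  induction ts with
  | nil => simp at ht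
  | cons t' ts ih =>
    rcases List.mem_cons.1 ht with rfl | ht
    · exact le_max_left _ _
    · exact (ih ht).trans (le_max_right _ _)

theorem heightList_le {ts : List (RTree α)} {n : ℕ} (h : ∀ t ∈ ts, height t ≤ n) :
    heightList ts ≤ n := by
  induction ts with
  | nil => exact Nat.zero_le n
  | cons t ts ih =>
    exact max_le (h t List.mem_cons_self) (ih fun t' ht' => h t' (List.mem_cons_of_mem _ ht'))

theorem mapList_eq (f : α → β) (ts : List (RTree α)) : mapList f ts = ts.map (map f) := by
  induction ts with
  | nil => rfl
  | cons t ts ih => simp [mapList, ih]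

theorem map_node (f : α → β) (a : α) (ts : List (RTree α)) :
    map f (node a ts) = node (f a) (ts.map (map f)) := by
  rw [map, mapList_eq]

theorem height_node (a : α) (ts : List (RTree α)) : height (node a ts) = 1 + heightList ts :=
  rfl

theorem height_map (f : α → β) (t : RTree α) : height (map f t) = height t := by
  induction t with
  | node a ts ih =>
    rw [map_node, height_node, height_node]
    congr 1
    refine le_antisymm (heightList_le ?_) (heightList_le fun t ht => ?_)
    · simp only [List.mem_map]
      rintro _ ⟨t, ht, rfl⟩
      exact (ih t ht).trans_le (height_le_heightList ht)
    · exact (ih t ht).symm.trans_le (height_le_heightList (List.mem_map_of_mem ht))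

theorem SubtreeAt.trans {t r r' : RTree α} {u v : List ℕ} (h : SubtreeAt t u r)
    (h' : SubtreeAt r v r') : SubtreeAt t (u ++ v) r' := by
  induction h with
  | here => exact h'
  | child hi _ ih => exact .child hi (ih h')

theorem SubtreeAt.exists_replaceAt {t r : RTree α} {u : List ℕ} (h : SubtreeAt t u r)
    (r' : RTree α) : ∃ t', ReplaceAt t u r' t' := by
  induction h with
  | here t => exact ⟨r', .here t r'⟩
  | child hi _ ih => exact ⟨_, .child hi ih.choose_spec⟩

theorem SubtreeAt.replaceAt_self {t r : RTree α} {u : List ℕ} (h : SubtreeAt t u r) :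
    ReplaceAt t u r t := by
  induction h with
  | here t => exact .here t t
  | @child a _ _ _ _ _ hi _ ih =>
    have h := ReplaceAt.child (a := a) hi ih
    obtain ⟨hlt, rfl⟩ := List.getElem?_eq_some_iff.1 hi
    rwa [List.set_getElem_self hlt] at h

theorem ReplaceAt.exists_subtreeAt_of_map {f : α → β} {s : RTree α} {u : List ℕ}
    {r t : RTree β} (h : ReplaceAt (s.map f) u r t) : ∃ sv, SubtreeAt s u sv := by
  induction s generalizing u t with
  | node a ts ih =>
    rw [map_node] at h
    cases h with
    | here => exact ⟨_, .here _⟩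
    | child hi h =>
      obtain ⟨ti, hti, rfl⟩ := Option.map_eq_some_iff.1 (List.getElem?_map ▸ hi)
      obtain ⟨sv, hsv⟩ := ih ti (List.mem_of_getElem? hti) h
      exact ⟨sv, .child hti hsv⟩

theorem WF.subtreeAt {rk : α → ℕ} {t r : RTree α} {u : List ℕ} (hwf : WF rk t)
    (h : SubtreeAt t u r) : WF rk r := by
  induction h with
  | here => exact hwf
  | child hi _ ih =>
    cases hwf with
    | node _ hts => exact ih (hts _ (List.mem_of_getElem? hi))

theorem WF.replaceAt {rk : α → ℕ} {t r t' : RTree α} {u : List ℕ} (hwf : WF rk t)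
    (hr : WF rk r) (h : ReplaceAt t u r t') : WF rk t' := by
  induction h with
  | here => exact hr
  | child hi _ ih =>
    cases hwf with
    | node hlen hts =>
      refine .node (by simpa using hlen) fun c hc => ?_
      rcases List.mem_or_eq_of_mem_set hc with hc | rfl
      · exact hts c hc
      · exact ih (hts _ (List.mem_of_getElem? hi)) hr

theorem exists_subtreeAt_forall_child_ne (f : RTree α → β) {t r : RTree α} {u : List ℕ}
    (hr : SubtreeAt t u r) :
    ∃ v a cs, SubtreeAt t v (node a cs) ∧ f (node a cs) = f r ∧
      ∀ c ∈ cs, ∀ v' r', SubtreeAt c v' r' → f r' ≠ f r := by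
  induction t generalizing u r with
  | node a ts ih =>
    by_cases hdeep : ∃ c ∈ ts, ∃ v' r', SubtreeAt c v' r' ∧ f r' = f r
    · obtain ⟨c, hc, v', r', hr', hfr'⟩ := hdeep
      obtain ⟨v, b, cs, hsub, hf, hne⟩ := ih c hc hr'
      obtain ⟨i, hi⟩ := List.getElem?_of_mem hc
      exact ⟨i :: v, b, cs, .child hi hsub, hf.trans hfr', hfr' ▸ hne⟩
    · push Not at hdeep
      cases hr with
      | here => exact ⟨[], a, ts, .here _, rfl, hdeep⟩
      | child hi hsub => exact absurd rfl (hdeep _ (List.mem_of_getElem? hi) _ _ hsub)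

theorem exists_wf_height_le_card_of_forall_subtreeAt_mem {f : RTree α → β} {rk : α → ℕ}
    (hf : ∀ a ts ts', ts.map f = ts'.map f → f (node a ts) = f (node a ts')) (A : Finset β) :
    ∀ t, WF rk t → (∀ u r, SubtreeAt t u r → f r ∈ A) →
      ∃ t', WF rk t' ∧ f t' = f t ∧ height t' ≤ A.card := by
  induction A using Finset.strongInduction with
  | H A ih =>
  classical
  intro t ht hA
  -- A subtree `node a cs` with the value of `t` below which this value does not recur: the
  -- values of the subtrees of its children avoid `f t`, so these can be shrunk by induction.
  obtain ⟨v, a, cs, hv, hfv, hcs⟩ := exists_subtreeAt_forall_child_ne f (.here t)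
  have hfA : f t ∈ A := hA _ _ (.here t)
  obtain ⟨hlen, hwfcs⟩ : cs.length = rk a ∧ ∀ c ∈ cs, WF rk c := by
    cases ht.subtreeAt hv with
    | node hlen hwfcs => exact ⟨hlen, hwfcs⟩
  have hsmall : ∀ c ∈ cs, ∃ c', (WF rk c' ∧ height c' ≤ (A.erase (f t)).card) ∧ f c' = f c := by
    intro c hc
    obtain ⟨i, hi⟩ := List.getElem?_of_mem hc
    obtain ⟨c', hwf', hf', hh'⟩ := ih _ (Finset.erase_ssubset hfA) c (hwfcs c hc)
      fun v' r' hr' => Finset.mem_erase.2 ⟨hcs c hc v' r' hr', hA _ _ (hv.trans (.child hi hr'))⟩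
    exact ⟨c', ⟨hwf', hh'⟩, hf'⟩
  obtain ⟨cs', hcs', hmap⟩ := List.exists_map_eq_map_of_forall_mem hsmall
  refine ⟨node a cs', ?_, (hf a cs' cs hmap).trans hfv, ?_⟩
  · exact .node (by simpa [hlen] using congrArg List.length hmap) fun c hc => (hcs' c hc).1
  · have hcard := Finset.card_erase_add_one hfA
    have := heightList_le fun c hc => (hcs' c hc).2
    rw [height_node]
    omega

theorem exists_wf_height_le_card [Fintype β] {f : RTree α → β} {rk : α → ℕ}
    (hf : ∀ a ts ts', ts.map f = ts'.map f → f (node a ts) = f (node a ts')) {t : RTree α}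
    (ht : WF rk t) : ∃ t', WF rk t' ∧ f t' = f t ∧ height t' ≤ Fintype.card β :=
  exists_wf_height_le_card_of_forall_subtreeAt_mem hf Finset.univ t ht fun _ _ _ =>
    Finset.mem_univ _

inductive HasLabel (a : α) : RTree α → Prop
  | root (ts : List (RTree α)) : HasLabel a (node a ts)
  | child {b : α} {ts : List (RTree α)} {t : RTree α} :
      t ∈ ts → HasLabel a t → HasLabel a (node b ts)

end RTree

section SententialForms

variable {Q S D : Type}

inductive IsTDForm : RTree (PL Q D) → Prop
  | out {d : D} {ts : List (RTree (PL Q D))} :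
      (∀ t ∈ ts, IsTDForm t) → IsTDForm (.node (.out d) ts)
  | st (q : Q) : IsTDForm (.node (.st q) [])

def substCalls (g : Q → RTree (PL Q D)) : RTree (PL Q D) → RTree (PL Q D)
  | .node (.st q) _ => g q
  | .node a ts => .node a (ts.map (substCalls g))

def substX (r : RTree (Option S)) : RTree (Option S) → RTree (Option S)
  | .node none _ => r
  | .node (some σ) ts => .node (some σ) (ts.map (substX r))

theorem psubstList_eq (vs ts : List (RTree (PL Q D))) : psubstList vs ts = ts.map (psubst vs) := by
  induction ts with
  | nil => rfl
  | cons t ts ih => simp [psubstList, ih]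

theorem IsTDForm.psubst_eq {t : RTree (PL Q D)} (ht : IsTDForm t) (vs : List (RTree (PL Q D))) :
    psubst vs t = t := by
  induction ht with
  | out _ ih =>
    rw [psubst, psubstList_eq, List.map_congr_left ih, List.map_id']
  | st q => rfl

theorem psubst_map_out (vs : List (RTree (PL Q D))) (t : RTree D) :
    psubst vs (t.map PL.out) = t.map PL.out := by
  induction t with
  | node d ts ih =>
    rw [RTree.map_node, psubst, psubstList_eq, List.map_map]
    exact congrArg _ (List.map_congr_left ih)

theorem isTDForm_substCalls {g : Q → RTree (PL Q D)} {t : RTree (PL Q D)} (ht : IsTDForm t)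
    (hg : ∀ q, t.HasLabel (.st q) → IsTDForm (g q)) : IsTDForm (substCalls g t) := by
  induction ht with
  | out _ ih =>
    simp only [substCalls]
    refine .out fun t' ht' => ?_
    obtain ⟨t, ht, rfl⟩ := List.mem_map.1 ht'
    exact ih t ht fun q hq => hg q (.child ht hq)
  | st q => simp only [substCalls]; exact hg q (.root _)

theorem height_le_height_substCalls {t : RTree (PL Q D)} (ht : IsTDForm t)
    (g : Q → RTree (PL Q D)) : t.height ≤ (substCalls g t).height := by
  induction ht with
  | out _ ih =>
    simp only [substCalls, RTree.height_node, add_le_add_iff_left]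
    exact RTree.heightList_le fun t ht =>
      (ih t ht).trans (RTree.height_le_heightList (List.mem_map_of_mem ht))
  | st q => exact RTree.height_pos _

theorem height_substCalls_le {g : Q → RTree (PL Q D)} {B : ℕ} (t : RTree (PL Q D))
    (hg : ∀ q, t.HasLabel (.st q) → (g q).height ≤ B) : (substCalls g t).height ≤ t.height + B := by
  induction t with
  | node a ts ih =>
    have hchildren : RTree.heightList (ts.map (substCalls g)) ≤ RTree.heightList ts + B := by
      refine RTree.heightList_le ?_
      simp only [List.mem_map]
      rintro _ ⟨t, ht, rfl⟩
      exact (ih t ht fun q hq => hg q (.child ht hq)).trans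
        (Nat.add_le_add_right (RTree.height_le_heightList ht) B)
    cases a with
    | st q => rw [substCalls]; exact (hg q (.root _)).trans (Nat.le_add_left _ _)
    | out d => simp only [substCalls, RTree.height_node]; omega
    | pr j => simp only [substCalls, RTree.height_node]; omega

theorem substX_map_some (r : RTree (Option S)) (s : RTree S) :
    substX r (s.map some) = s.map some := by
  induction s with
  | node a ts ih =>
    rw [RTree.map_node, substX, List.map_map]
    exact congrArg _ (List.map_congr_left ih)

theorem substX_eq_of_replaceAt {s s' w : RTree S} {u : List ℕ} {pt : RTree (Option S)}
    (hpt : RTree.ReplaceAt (s.map some) u xLeaf pt) (hs' : RTree.ReplaceAt s u w s') :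
    substX (w.map some) pt = s'.map some := by
  induction hs' generalizing pt with
  | here =>
    generalize RTree.map some _ = m at hpt
    cases hpt
    rw [xLeaf, substX]
  | child hi _ ih =>
    rw [RTree.map_node] at hpt
    cases hpt with
    | child hi' hpt =>
      rw [List.getElem?_map, hi, Option.map_some, Option.some_inj] at hi'
      subst hi'
      rw [substX, RTree.map_node, List.map_set, List.map_set, ih hpt, List.map_map]
      congr 2
      exact List.map_congr_left fun t _ => substX_map_some _ t

end SententialForms

theorem MTT.Proper.rhsWF_of_isTopDown {Q S D : Type} {M : MTT Q S D} (hp : M.Proper)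
    (htd : IsTopDown M) {q : Q} {σ : S} {r : MRhs Q D} (hr : M.rules q σ = some r) :
    RhsWF M.rkD M.prm (M.rkS σ) 0 r :=
  htd q ▸ hp.2 q σ r hr

theorem RhsWF.args_eq_nil_of_isTopDown {Q S D : Type} {M : MTT Q S D} (htd : IsTopDown M)
    {k m : ℕ} {q : Q} {i : ℕ} {ps : List (MRhs Q D)}
    (h : RhsWF M.rkD M.prm k m (.call q i ps)) : ps = [] := by
  cases h with
  | call _ hlen _ => exact List.eq_nil_of_length_eq_zero (hlen.trans (htd q))

namespace MEval

variable {Q S D : Type} {M : MTT Q S D}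

theorem det {q : Q} {s : RTree (Option S)} {t t' : RTree (PL Q D)} (h : MEval M q s t)
    (h' : MEval M q s t') : t = t' := by
  induction h using MEval.rec
    (motive_2 := fun ss r t _ => ∀ t', MExpand M ss r t' → t = t')
    (motive_3 := fun ss rs ts _ => ∀ ts', MExpandList M ss rs ts' → ts = ts') generalizing t' with
  | atX q => cases h'; rfl
  | step hr _ ih =>
    cases h' with
    | step hr' he' =>
      cases hr.symm.trans hr'
      exact ih _ he'
  | out _ ih t' h' => cases h' with | out h' => rw [ih _ h']
  | param t' h' => cases h'; rfl
  | call hi _ _ ihl ihe t' h' =>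
    cases h' with
    | call hi' hl' he' =>
      cases hi.symm.trans hi'
      rw [ihl _ hl', ihe he']
  | nil ts' h' => cases h'; rfl
  | cons _ _ ih ihs ts' h' => cases h' with | cons h' hs' => rw [ih _ h', ihs _ hs']

variable (hp : M.Proper) (htd : IsTopDown M)
include hp htd

theorem isTDForm {q : Q} {s : RTree (Option S)} {t : RTree (PL Q D)} (h : MEval M q s t) :
    IsTDForm t := by
  induction h using MEval.rec
    (motive_2 := fun ss r t _ => ∀ k, RhsWF M.rkD M.prm k 0 r → IsTDForm t)
    (motive_3 := fun ss rs ts _ => ∀ k, (∀ r ∈ rs, RhsWF M.rkD M.prm k 0 r) →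
      ∀ t ∈ ts, IsTDForm t) with
  | atX q => simp only [htd q, List.range_zero, List.map_nil]; exact .st q
  | step hr _ ih => exact ih _ (hp.rhsWF_of_isTopDown htd hr)
  | out _ ih k hwf => cases hwf with | out _ hts => exact .out (ih k hts)
  | param k hwf => cases hwf; omega
  | call _ hl _ _ ihe k hwf =>
    obtain rfl := hwf.args_eq_nil_of_isTopDown htd
    cases hl
    rw [ihe.psubst_eq]
    exact ihe
  | nil k _ t ht => simp at ht
  | cons _ _ ih ihs k hwf t ht =>
    obtain ⟨hwf, hwfs⟩ := List.forall_mem_cons.1 hwf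
    rcases List.mem_cons.1 ht with rfl | ht
    exacts [ih k hwf, ihs k hwfs t ht]

theorem exists_eq_map_out {q : Q} {w : RTree S} {t : RTree (PL Q D)}
    (h : MEval M q (w.map some) t) : ∃ t' : RTree D, t = t'.map PL.out := by
  generalize hs : w.map some = s at h
  induction h using MEval.rec
    (motive_2 := fun ss r t _ => ∀ k, RhsWF M.rkD M.prm k 0 r →
      (∀ s ∈ ss, ∃ w : RTree S, s = w.map some) → ∃ t' : RTree D, t = t'.map PL.out)
    (motive_3 := fun ss rs ts _ => ∀ k, (∀ r ∈ rs, RhsWF M.rkD M.prm k 0 r) →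
      (∀ s ∈ ss, ∃ w : RTree S, s = w.map some) →
      ∃ ts' : List (RTree D), ts = ts'.map (RTree.map PL.out)) generalizing w with
  | atX q => cases w; simp [RTree.map_node] at hs
  | step hr _ ih =>
    cases w with
    | node a ws =>
      rw [RTree.map_node] at hs
      injection hs with _ hs
      subst hs
      refine ih _ (hp.rhsWF_of_isTopDown htd hr) fun s hs => ?_
      obtain ⟨w, _, rfl⟩ := List.mem_map.1 hs
      exact ⟨w, rfl⟩
  | out _ ih k hwf hss =>
    cases hwf with
    | out _ hts =>
      obtain ⟨ts', rfl⟩ := ih k hts hss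
      exact ⟨.node _ ts', (RTree.map_node _ _ _).symm⟩
  | param k hwf => cases hwf; omega
  | call hi hl _ _ ihe k hwf hss =>
    obtain rfl := hwf.args_eq_nil_of_isTopDown htd
    cases hl
    obtain ⟨w, rfl⟩ := hss _ (List.mem_of_getElem? hi)
    obtain ⟨u', rfl⟩ := ihe rfl
    exact ⟨u', psubst_map_out _ _⟩
  | nil => exact ⟨[], rfl⟩
  | cons _ _ ih ihs k hwf hss =>
    obtain ⟨hwf, hwfs⟩ := List.forall_mem_cons.1 hwf
    obtain ⟨t', rfl⟩ := ih k hwf hss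
    obtain ⟨ts', rfl⟩ := ihs k hwfs hss
    exact ⟨t' :: ts', rfl⟩

theorem height_le {h : ℕ} (hh : 1 ≤ h)
    (hmax : ∀ q σ r, M.rules q σ = some r → rhsHeight r ≤ h) {q : Q} {s : RTree (Option S)}
    {t : RTree (PL Q D)} (he : MEval M q s t) : t.height ≤ h * s.height := by
  induction he using MEval.rec
    (motive_2 := fun ss r t _ => ∀ k, RhsWF M.rkD M.prm k 0 r →
      t.height ≤ rhsHeight r + h * RTree.heightList ss)
    (motive_3 := fun ss rs ts _ => ∀ k, (∀ r ∈ rs, RhsWF M.rkD M.prm k 0 r) →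
      RTree.heightList ts ≤ rhsHeightList rs + h * RTree.heightList ss) with
  | atX q =>
    simp only [htd q, List.range_zero, List.map_nil, RTree.height_node, RTree.heightList]
    omega
  | step hr _ ih =>
    have := ih _ (hp.rhsWF_of_isTopDown htd hr)
    have := hmax _ _ _ hr
    rw [RTree.height_node, mul_add, mul_one]
    omega
  | out _ ih k hwf =>
    cases hwf with
    | out _ hts =>
      have := ih k hts
      rw [RTree.height_node, rhsHeight]
      omega
  | param =>
    simp only [RTree.height_node, RTree.heightList, rhsHeight]
    omega
  | call hi hl hev _ ihe k hwf =>
    obtain rfl := hwf.args_eq_nil_of_isTopDown htd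
    cases hl
    rw [(hev.isTDForm hp htd).psubst_eq, rhsHeight]
    have := Nat.mul_le_mul_left h (RTree.height_le_heightList (List.mem_of_getElem? hi))
    omega
  | nil => exact Nat.zero_le _
  | cons _ _ ih ihs k hwf =>
    obtain ⟨hwf, hwfs⟩ := List.forall_mem_cons.1 hwf
    have := ih k hwf
    have := ihs k hwfs
    simp only [RTree.heightList, rhsHeightList]
    omega

theorem substX_substCalls {r : RTree (Option S)} {g : Q → RTree (PL Q D)} {q : Q}
    {a : RTree (Option S)} {ξ : RTree (PL Q D)} (h : MEval M q a ξ)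
    (hg : ∀ q', ξ.HasLabel (.st q') → MEval M q' r (g q')) :
    MEval M q (substX r a) (substCalls g ξ) := by
  induction h using MEval.rec
    (motive_2 := fun ss rhs t _ => ∀ k, RhsWF M.rkD M.prm k 0 rhs →
      (∀ q', t.HasLabel (.st q') → MEval M q' r (g q')) →
      MExpand M (ss.map (substX r)) rhs (substCalls g t))
    (motive_3 := fun ss rhss ts _ => ∀ k, (∀ rhs ∈ rhss, RhsWF M.rkD M.prm k 0 rhs) →
      (∀ t ∈ ts, ∀ q', t.HasLabel (.st q') → MEval M q' r (g q')) →
      MExpandList M (ss.map (substX r)) rhss (ts.map (substCalls g))) with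
  | atX q => simpa [xLeaf, substX, substCalls] using hg q (.root _)
  | step hr _ ih =>
    rw [substX]
    exact .step hr (ih _ (hp.rhsWF_of_isTopDown htd hr) hg)
  | out _ ih k hwf hg =>
    cases hwf with
    | out _ hts =>
      simp only [substCalls]
      exact .out (ih k hts fun t ht q' hq' => hg q' (.child ht hq'))
  | param k hwf => cases hwf; omega
  | call hi hl hev _ ihe k hwf hg =>
    obtain rfl := hwf.args_eq_nil_of_isTopDown htd
    cases hl
    have hu := hev.isTDForm hp htd
    rw [hu.psubst_eq] at hg ⊢
    have hcall := MExpand.call (List.getElem?_map ▸ congrArg (Option.map (substX r)) hi)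
      .nil (ihe hg)
    rwa [(isTDForm_substCalls hu fun q' hq' => (hg q' hq').isTDForm hp htd).psubst_eq]
      at hcall
  | nil => exact .nil
  | cons _ _ ih ihs k hwf hg =>
    obtain ⟨hwf, hwfs⟩ := List.forall_mem_cons.1 hwf
    obtain ⟨hg, hgs⟩ := List.forall_mem_cons.1 hg
    exact .cons (ih k hwf hg) (ihs k hwfs hgs)

theorem exists_of_hasLabel {r : RTree (Option S)} {q : Q} {a : RTree (Option S)}
    {ξ θ : RTree (PL Q D)} (h : MEval M q a ξ) (hθ : MEval M q (substX r a) θ) {q' : Q}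
    (hq' : ξ.HasLabel (.st q')) : ∃ v, MEval M q' r v := by
  induction h using MEval.rec
    (motive_2 := fun ss rhs t _ => ∀ k, RhsWF M.rkD M.prm k 0 rhs →
      ∀ t', MExpand M (ss.map (substX r)) rhs t' →
      ∀ q', t.HasLabel (.st q') → ∃ v, MEval M q' r v)
    (motive_3 := fun ss rhss ts _ => ∀ k, (∀ rhs ∈ rhss, RhsWF M.rkD M.prm k 0 rhs) →
      ∀ ts', MExpandList M (ss.map (substX r)) rhss ts' →
      ∀ t ∈ ts, ∀ q', t.HasLabel (.st q') → ∃ v, MEval M q' r v) generalizing θ q' with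
  | atX q =>
    simp only [htd q, List.range_zero, List.map_nil] at hq'
    cases hq' with
    | root => simp only [substX] at hθ; exact ⟨θ, hθ⟩
    | child ht _ => simp at ht
  | step hr _ ih =>
    rw [substX] at hθ
    cases hθ with
    | step hr' he' =>
      cases hr.symm.trans hr'
      exact ih _ (hp.rhsWF_of_isTopDown htd hr) _ he' _ hq'
  | out _ ih k hwf t' he' q' hq' =>
    cases hwf with
    | out _ hts =>
      cases he' with
      | out hl' =>
        cases hq' with
        | child ht hq' => exact ih k hts _ hl' _ ht _ hq'
  | param k hwf => cases hwf; omega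
  | call hi hl hev _ ihe k hwf t' he' q' hq' =>
    obtain rfl := hwf.args_eq_nil_of_isTopDown htd
    cases hl
    rw [(hev.isTDForm hp htd).psubst_eq] at hq'
    cases he' with
    | call hi' _ hev' =>
      rw [List.getElem?_map, hi, Option.map_some, Option.some_inj] at hi'
      subst hi'
      exact ihe hev' hq'
  | nil k _ ts' _ t ht => simp at ht
  | cons _ _ ih ihs k hwf ts' he' t ht q' hq' =>
    obtain ⟨hwf, hwfs⟩ := List.forall_mem_cons.1 hwf
    cases he' with
    | cons h₁ h₂ =>
      rcases List.mem_cons.1 ht with rfl | ht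
      exacts [ih k hwf _ h₁ _ hq', ihs k hwfs _ h₂ t ht _ hq']

end MEval

section DefinedStates

variable {Q S D : Type} {M : MTT Q S D}

def MTT.definedStates (M : MTT Q S D) (s : RTree (Option S)) : Set Q :=
  {q | ∃ t, MEval M q s t}

theorem MExpand.exists_of_forall_getElem? {ss ss' : List (RTree (Option S))} {r : MRhs Q D}
    {t : RTree (PL Q D)} (h : MExpand M ss r t)
    (hss : ∀ (i : ℕ) (s : RTree (Option S)), ss[i]? = some s →
      ∃ s', ss'[i]? = some s' ∧ M.definedStates s ⊆ M.definedStates s') :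
    ∃ t', MExpand M ss' r t' := by
  induction h using MExpand.rec
    (motive_1 := fun _ _ _ _ => True)
    (motive_3 := fun ss rs _ _ => (∀ (i : ℕ) (s : RTree (Option S)), ss[i]? = some s →
      ∃ s', ss'[i]? = some s' ∧ M.definedStates s ⊆ M.definedStates s') →
      ∃ ts', MExpandList M ss' rs ts') with
  | atX | step => trivial
  | out _ ih => obtain ⟨us, hus⟩ := ih hss; exact ⟨_, .out hus⟩
  | param => exact ⟨_, .param⟩
  | call hi _ hev ihl _ =>
    obtain ⟨s', hs', hdef⟩ := hss _ _ hi
    obtain ⟨u', hu'⟩ : _ ∈ M.definedStates s' := hdef ⟨_, hev⟩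
    obtain ⟨vs', hvs'⟩ := ihl hss
    exact ⟨_, .call hs' hvs' hu'⟩
  | nil => exact ⟨[], .nil⟩
  | cons _ _ ih ihs hss =>
    obtain ⟨u', hu'⟩ := ih hss
    obtain ⟨us', hus'⟩ := ihs hss
    exact ⟨_, .cons hu' hus'⟩

theorem MTT.definedStates_node_subset {a : S} {ts ts' : List (RTree S)}
    (h : ts.map (M.definedStates ∘ RTree.map some) = ts'.map (M.definedStates ∘ RTree.map some)) :
    M.definedStates ((RTree.node a ts).map some) ⊆
      M.definedStates ((RTree.node a ts').map some) := by
  rintro q ⟨t, ht⟩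
  rw [RTree.map_node] at ht
  cases ht with
  | step hr he =>
    obtain ⟨t', he'⟩ := he.exists_of_forall_getElem? fun i s hs => by
      obtain ⟨w, hw, rfl⟩ := Option.map_eq_some_iff.1 (List.getElem?_map ▸ hs)
      have hi := congrArg (·[i]?) h
      simp only [List.getElem?_map, hw, Option.map_some] at hi
      obtain ⟨w', hw', hww'⟩ := Option.map_eq_some_iff.1 hi.symm
      exact ⟨w'.map some, by rw [List.getElem?_map, hw', Option.map_some], hww'.ge⟩
    exact ⟨t', RTree.map_node _ _ _ ▸ .step hr he'⟩

theorem MTT.definedStates_node_congr {a : S} {ts ts' : List (RTree S)}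
    (h : ts.map (M.definedStates ∘ RTree.map some) = ts'.map (M.definedStates ∘ RTree.map some)) :
    M.definedStates ((RTree.node a ts).map some) = M.definedStates ((RTree.node a ts').map some) :=
  (definedStates_node_subset h).antisymm (definedStates_node_subset h.symm)

end DefinedStates

theorem rhsHeight_pos {Q D : Type} (r : MRhs Q D) : 1 ≤ rhsHeight r := by
  cases r <;> simp [rhsHeight]

theorem MEval.exists_height_bounds_of_replaceAt {Q S D : Type} {M : MTT Q S D} (hp : M.Proper)
    (htd : IsTopDown M) {h : ℕ} (hmax : ∀ q σ r, M.rules q σ = some r → rhsHeight r ≤ h)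
    {q : Q} {s sv w s' : RTree S} {u : List ℕ} {pt : RTree (Option S)} {t ξ : RTree (PL Q D)}
    (hs : MEval M q (s.map some) t) (hsv : RTree.SubtreeAt s u sv)
    (hs' : RTree.ReplaceAt s u w s') (hpt : RTree.ReplaceAt (s.map some) u xLeaf pt)
    (hw : M.definedStates (sv.map some) ⊆ M.definedStates (w.map some)) (hξ : MEval M q pt ξ) :
    ∃ θ : RTree D, MEval M q (s'.map some) (θ.map PL.out) ∧
      ξ.height ≤ θ.height ∧ θ.height ≤ ξ.height + h * w.height := by
  have hh : 1 ≤ h := by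
    cases s with
    | node a ts =>
      rw [RTree.map_node] at hs
      cases hs with
      | step hr _ => exact (rhsHeight_pos _).trans (hmax _ _ _ hr)
  -- Both `s` and `s'` are instances `pt[x ← ·]` of the partial input.
  rw [← substX_eq_of_replaceAt hpt hsv.replaceAt_self] at hs
  have hcalls : ∀ q', ξ.HasLabel (.st q') → ∃ v, MEval M q' (w.map some) v := fun q' hq' =>
    hw (hξ.exists_of_hasLabel hp htd hs hq')
  have : Nonempty (RTree (PL Q D)) := ⟨ξ⟩
  choose! g hg using hcalls
  have hθ := hξ.substX_substCalls hp htd hg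
  rw [substX_eq_of_replaceAt hpt hs'] at hθ
  obtain ⟨θ, hθeq⟩ := hθ.exists_eq_map_out hp htd
  refine ⟨θ, hθeq ▸ hθ, ?_, ?_⟩ <;> rw [← RTree.height_map PL.out θ, ← hθeq]
  · exact height_le_height_substCalls (hξ.isTDForm hp htd) g
  · refine height_substCalls_le ξ fun q' hq' => ?_
    simpa [RTree.height_map] using (hg q' hq').height_le hp htd hh hmax

theorem equivalent_tdtt_bounded_height_balance {Q1 Q2 S D : Type}
    [Fintype Q1] [Fintype Q2] [Fintype S] [Fintype D]
    (M1 : MTT Q1 S D) (M2 : MTT Q2 S D)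
    (hp1 : MTT.Proper M1) (hp2 : MTT.Proper M2)
    (htd1 : IsTopDown M1) (htd2 : IsTopDown M2)
    (hS : M1.rkS = M2.rkS) (hD : M1.rkD = M2.rkD)
    (hequiv : MTT.tau M1 = MTT.tau M2)
    (h : ℕ)
    (hmax1 : ∀ q σ r, M1.rules q σ = some r → rhsHeight r ≤ h)
    (hmax2 : ∀ q σ r, M2.rules q σ = some r → rhsHeight r ≤ h) :
    ∀ s u pt, (∃ t, (s, t) ∈ MTT.tau M1) →
      RTree.ReplaceAt (RTree.map some s) u xLeaf pt →
      ∀ ξ1 ξ2, MEval M1 M1.init pt ξ1 → MEval M2 M2.init pt ξ2 →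
        |(ξ1.height : ℤ) - (ξ2.height : ℤ)| ≤
          2 ^ (Fintype.card Q1 + Fintype.card Q2) * h := by
  classical
  intro s u pt ⟨t, hst⟩ hpt ξ1 ξ2 hξ1 hξ2
  have hs2 : (s, t) ∈ M2.tau := hequiv ▸ hst
  obtain ⟨sv, hsv⟩ := hpt.exists_subtreeAt_of_map
  let type (w : RTree S) : Set Q1 × Set Q2 :=
    (M1.definedStates (w.map some), M2.definedStates (w.map some))
  have htype : ∀ a ts ts', ts.map type = ts'.map type → type (.node a ts) = type (.node a ts') := by
    intro a ts ts' hts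
    have h1 := congrArg (List.map Prod.fst) hts
    have h2 := congrArg (List.map Prod.snd) hts
    rw [List.map_map, List.map_map] at h1 h2
    exact Prod.ext (MTT.definedStates_node_congr h1) (MTT.definedStates_node_congr h2)
  obtain ⟨w, hwfw, hfw, hw⟩ := RTree.exists_wf_height_le_card htype (hst.1.subtreeAt hsv)
  obtain ⟨s', hs'⟩ := hsv.exists_replaceAt w
  obtain ⟨θ1, hθ1, hlo1, hup1⟩ := MEval.exists_height_bounds_of_replaceAt hp1 htd1 hmax1
    hst.2 hsv hs' hpt (congrArg Prod.fst hfw).ge hξ1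
  obtain ⟨θ2, hθ2, hlo2, hup2⟩ := MEval.exists_height_bounds_of_replaceAt hp2 htd2 hmax2
    hs2.2 hsv hs' hpt (congrArg Prod.snd hfw).ge hξ2
  have hθ : θ1.height = θ2.height := by
    have hs'2 : (s', θ1) ∈ M2.tau := hequiv ▸ ⟨hst.1.replaceAt hwfw hs', hθ1⟩
    simpa [RTree.height_map] using congrArg RTree.height (hs'2.2.det hθ2)
  have hc : h * w.height ≤ 2 ^ (Fintype.card Q1 + Fintype.card Q2) * h := by
    rw [Fintype.card_prod, Fintype.card_set, Fintype.card_set, ← pow_add] at hw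
    rw [mul_comm]
    exact Nat.mul_le_mul_right h hw
  rw [abs_sub_le_iff]
  constructor <;> zify at * <;> linarith
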